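/- arXiv:2206.13421 — 4 statements merged into one kernel-verified Lean document; each statement's English description precedes it below -/
import Mathlib

section
/- Let V be a pseudovariety of semigroups and let (S_i)_{i∈I} be a nonempty family of pro-V semigroups. Then a V-coproduct of the family exists: there are a pro-V semigroup S and continuous homomorphisms φ_i : S_i → S such that for every pro-V semigroup T and every family of continuous homomorphisms ψ_i : S_i → T there is a unique continuous homomorphism ψ : S → T with ψ∘φ_i = ψ_i for all i∈I. -/
set_option autoImplicit false

/-! ### General notions: topological semigroups, pseudovarieties, pro-V semigroups -/

/-- Continuity of a map into a type regarded with the discrete topology. -/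
def ContinuousDisc {S : Type} [TopologicalSpace S] {T : Type} (f : S → T) : Prop :=
  @Continuous S T _ ⊥ f

/-- A pseudovariety of semigroups: a class of finite semigroups closed under
homomorphic images, subsemigroups and finite direct products. -/
structure Pseudovariety : Type 1 where
  Mem : ∀ (S : Type) [Semigroup S], Prop
  finite : ∀ (S : Type) [Semigroup S], Mem S → Finite S
  closed_hom : ∀ (S T : Type) [Semigroup S] [Semigroup T] (f : S →ₙ* T),
    Mem S → Function.Surjective f → Mem T
  closed_sub : ∀ (S T : Type) [Semigroup S] [Semigroup T] (f : T →ₙ* S),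
    Mem S → Function.Injective f → Mem T
  closed_prod : ∀ (ι : Type) [Finite ι] (S : ι → Type) [∀ i, Semigroup (S i)],
    (∀ i, Mem (S i)) → Mem (∀ i, S i)

/-- A bundled member of a pseudovariety `V` (a finite semigroup belonging to `V`),
always regarded as carrying the discrete topology. -/
structure SgrIn (V : Pseudovariety) : Type 1 where
  carrier : Type
  [str : Semigroup carrier]
  mem : V.Mem carrier

attribute [instance] SgrIn.str

/-- A (bundled) topological semigroup. -/
structure TopSgr : Type 1 where
  carrier : Type
  [str : Semigroup carrier]
  [top : TopologicalSpace carrier]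

attribute [instance] TopSgr.str TopSgr.top

/-- A finite semigroup regarded as a topological semigroup with the discrete topology. -/
def discTopSgr (S : Type) [Semigroup S] : TopSgr :=
  @TopSgr.mk S _ ⊥

/-- A pro-V semigroup: a compact Hausdorff topological semigroup that is residually `V`. -/
def IsProV (V : Pseudovariety) (S : TopSgr) : Prop :=
  CompactSpace S.carrier ∧ T2Space S.carrier ∧ ContinuousMul S.carrier ∧
    ∀ x y : S.carrier, x ≠ y → ∃ (F : SgrIn V) (f : S.carrier →ₙ* F.carrier),
      ContinuousDisc ⇑f ∧ f x ≠ f y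

/-- A profinite semigroup: a compact Hausdorff totally disconnected topological semigroup. -/
def IsProfiniteSgr (S : TopSgr) : Prop :=
  CompactSpace S.carrier ∧ T2Space S.carrier ∧ TotallyDisconnectedSpace S.carrier ∧
    ContinuousMul S.carrier

/-- `C`, together with the continuous homomorphisms `φ i`, is a `V`-coproduct of the
family `S` of pro-`V` semigroups. -/
structure IsCoproduct (V : Pseudovariety) {I : Type} (S : I → TopSgr)
    (C : TopSgr) (φ : ∀ i, (S i).carrier →ₙ* C.carrier) : Prop where
  proV : IsProV V C
  cont : ∀ i, Continuous ⇑(φ i)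
  universal : ∀ (T : TopSgr), IsProV V T →
    ∀ ψ : ∀ i, (S i).carrier →ₙ* T.carrier, (∀ i, Continuous ⇑(ψ i)) →
      ∃! Ψ : C.carrier →ₙ* T.carrier, Continuous ⇑Ψ ∧ ∀ i, Ψ.comp (φ i) = ψ i

/-- `P`, together with the homomorphisms `e i`, is a free product (coproduct in the
category of semigroups) of the family `S`. -/
structure IsFreeProduct {I : Type} (S : I → Type) [∀ i, Semigroup (S i)]
    (P : Type) [Semigroup P] (e : ∀ i, S i →ₙ* P) : Prop where
  universal : ∀ (T : Type) [Semigroup T] (f : ∀ i, S i →ₙ* T),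
    ∃! F : P →ₙ* T, ∀ i, F.comp (e i) = f i

/-! ### Particular pseudovarieties and related notions -/

/-- `V` contains the pseudovariety `Sl` of finite semilattices. -/
def ContainsSl (V : Pseudovariety) : Prop :=
  ∀ (S : Type) [Semigroup S] [Finite S],
    (∀ x y : S, x * y = y * x) → (∀ x : S, x * x = x) → V.Mem S

/-- Green's `J`-preorder: `s ≤_J t`, i.e. `s ∈ S^I t S^I`. -/
def JBelow {S : Type} [Semigroup S] (s t : S) : Prop :=
  ∃ x y : WithOne S, x * (t : WithOne S) * y = (s : WithOne S)

/-- `V` contains the pseudovariety `J` of finite `J`-trivial semigroups. -/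
def ContainsJ (V : Pseudovariety) : Prop :=
  ∀ (S : Type) [Semigroup S] [Finite S],
    (∀ s t : S, JBelow s t → JBelow t s → s = t) → V.Mem S

/-- The preimage of an idempotent under a semigroup homomorphism, as a subsemigroup. -/
def fiberSub {S T : Type} [Semigroup S] [Semigroup T] (ψ : S →ₙ* T) (e : T)
    (he : e * e = e) : Subsemigroup S where
  carrier := ⇑ψ ⁻¹' {e}
  mul_mem' := by
    intro a b ha hb
    simp only [Set.mem_preimage, Set.mem_singleton_iff] at *
    rw [map_mul, ha, hb, he]

/-- The set of products of `n+1` elements of a semigroup (so `nthProds S 0 = S`). -/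
def nthProds (S : Type) [Semigroup S] : ℕ → Set S
  | 0 => Set.univ
  | n + 1 => {x | ∃ a y, y ∈ nthProds S n ∧ x = a * y}

/-- A nilpotent semigroup: it has a zero `z` and some power of the semigroup is `{z}`. -/
def IsNilpotentSgr (S : Type) [Semigroup S] : Prop :=
  ∃ z : S, (∀ x : S, z * x = z ∧ x * z = z) ∧ ∃ n : ℕ, nthProds S n ⊆ {z}

/-- A generator of the Mal'cev product `N ⓜ V`: a finite semigroup admitting a surjective
homomorphism onto a member of `V` all of whose idempotent fibers are nilpotent. -/
def NMalcevGen (V : Pseudovariety) (S : Type) [Semigroup S] : Prop :=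
  Finite S ∧ ∃ (T : SgrIn V) (ψ : S →ₙ* T.carrier), Function.Surjective ψ ∧
    ∀ (e : T.carrier) (he : e * e = e), IsNilpotentSgr (fiberSub ψ e he)

/-- The equality `N ⓜ V = V`: `V` coincides with the smallest pseudovariety containing
all finite semigroups admitting an `N`-morphism onto some member of `V`. -/
def NMalcevFixed (V : Pseudovariety) : Prop :=
  ∀ (S : Type) [Semigroup S] [Finite S],
    V.Mem S ↔ ∀ U : Pseudovariety,
      (∀ (S' : Type) [Semigroup S'], NMalcevGen V S' → U.Mem S') → U.Mem S

/-- A completely simple semigroup: simple with a primitive idempotent. -/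
def IsCompletelySimple (S : Type) [Semigroup S] : Prop :=
  (∀ J : Set S, J.Nonempty → (∀ s x : S, x ∈ J → s * x ∈ J ∧ x * s ∈ J) → J = Set.univ) ∧
  ∃ e : S, e * e = e ∧ ∀ f : S, f * f = f → e * f = f → f * e = f → f = e

/-- An equidivisible semigroup. -/
def Equidivisible (S : Type) [Semigroup S] : Prop :=
  ∀ u v x y : S, u * v = x * y →
    ∃ t : WithOne S,
      ((x : WithOne S) = (u : WithOne S) * t ∧ t * (y : WithOne S) = (v : WithOne S)) ∨
      ((x : WithOne S) * t = (u : WithOne S) ∧ (y : WithOne S) = t * (v : WithOne S))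

/-! ### The two-sided Karnofsky–Rhodes expansion -/

/-- Vertices of the two-sided Cayley graph of `T`: pairs of elements of `T^I`. -/
abbrev KRVtx (T : Type) : Type := WithOne T × WithOne T

/-- Edges of the two-sided Cayley graph: (source, label, target). -/
abbrev KREdge (A T : Type) : Type := KRVtx T × A × KRVtx T

/-- The image in `T^I` of a letter. -/
def letterImg {A T : Type} [Semigroup T] (ψ : FreeSemigroup A →ₙ* T) (a : A) : WithOne T :=
  (ψ (FreeSemigroup.of a) : WithOne T)

/-- The image in `T^I` of a (possibly empty) word. -/
def wordImg {A T : Type} [Semigroup T] (ψ : FreeSemigroup A →ₙ* T) (w : List A) : WithOne T :=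
  (w.map (letterImg ψ)).prod

/-- `e` is an edge of the two-sided Cayley graph `Γ_ψ`. -/
def IsKREdge {A T : Type} [Semigroup T] (ψ : FreeSemigroup A →ₙ* T) (e : KREdge A T) : Prop :=
  e.1.1 * letterImg ψ e.2.1 = e.2.2.1 ∧ e.1.2 = letterImg ψ e.2.1 * e.2.2.2

/-- One step along an edge of `Γ_ψ` (used to define directed paths). -/
def KRStep {A T : Type} [Semigroup T] (ψ : FreeSemigroup A →ₙ* T) (v w : KRVtx T) : Prop :=
  ∃ a : A, v.1 * letterImg ψ a = w.1 ∧ v.2 = letterImg ψ a * w.2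

/-- A transition edge of `Γ_ψ`: an edge from whose target there is no directed path
back to its source. -/
def IsTransEdge {A T : Type} [Semigroup T] (ψ : FreeSemigroup A →ₙ* T) (e : KREdge A T) : Prop :=
  IsKREdge ψ e ∧ ¬ Relation.ReflTransGen (KRStep ψ) e.2.2 e.1

/-- The list of letters of an element of the free semigroup. -/
def letters {A : Type} (u : FreeSemigroup A) : List A := u.head :: u.tail

/-- The set of edges of the path `p_u` of `Γ_ψ` from `(I, ψ u)` to `(ψ u, I)` labeled by `u`. -/
def pathEdges {A T : Type} [Semigroup T] (ψ : FreeSemigroup A →ₙ* T) (u : FreeSemigroup A) :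
    Set (KREdge A T) :=
  {e | ∃ (w₁ w₂ : List A) (a : A), letters u = w₁ ++ a :: w₂ ∧
    e = ((wordImg ψ w₁, wordImg ψ (a :: w₂)), a, (wordImg ψ (w₁ ++ [a]), wordImg ψ w₂))}

/-- The set `T(p_u)` of transition edges of `Γ_ψ` occurring in the path `p_u`. -/
def transEdges {A T : Type} [Semigroup T] (ψ : FreeSemigroup A →ₙ* T) (u : FreeSemigroup A) :
    Set (KREdge A T) :=
  {e ∈ pathEdges ψ u | IsTransEdge ψ e}

/-- A realization of the two-sided Karnofsky–Rhodes expansion of `ψ : A⁺ → T`: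
a semigroup `K = T_ψ^KR` together with the projection `ψ^KR : A⁺ → K`, which is onto and
identifies `u` and `v` exactly when `ψ u = ψ v` and `T(p_u) = T(p_v)`, and the canonical
homomorphism `π : T_ψ^KR → T` with `π ∘ ψ^KR = ψ`. -/
structure KRExp {A T : Type} [Semigroup T] (ψ : FreeSemigroup A →ₙ* T) : Type 1 where
  K : Type
  [strK : Semigroup K]
  [finK : Finite K]
  ψKR : FreeSemigroup A →ₙ* K
  π : K →ₙ* T
  surj : Function.Surjective ⇑ψKR
  ker : ∀ u v : FreeSemigroup A, ψKR u = ψKR v ↔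
    (ψ u = ψ v ∧ transEdges ψ u = transEdges ψ v)
  proj : π.comp ψKR = ψ

attribute [instance] KRExp.strK KRExp.finK

/-- The data of a two-sided Karnofsky–Rhodes expansion of a finite semigroup `T`:
a finite alphabet `A`, an onto homomorphism `ψ : A⁺ → T`, and a realization `T_ψ^KR`. -/
structure KRData (T : Type) [Semigroup T] : Type 1 where
  A : Type
  [finA : Finite A]
  ψ : FreeSemigroup A →ₙ* T
  surjψ : Function.Surjective ⇑ψ
  E : KRExp ψ

attribute [instance] KRData.finA

/-- `V` is closed under two-sided Karnofsky–Rhodes expansion. -/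
def ClosedUnderKR (V : Pseudovariety) : Prop :=
  ∀ (A T : Type) [Finite A] [Semigroup T], V.Mem T →
    ∀ (ψ : FreeSemigroup A →ₙ* T), Function.Surjective ⇑ψ →
      ∀ E : KRExp ψ, V.Mem E.K

/-! ### KR-covers -/

/-- `S` is a KR-cover of the finite semigroup `T`. -/
def IsKRCoverOf (S : TopSgr) (T : Type) [Semigroup T] [Finite T] : Prop :=
  (∃ φ : S.carrier →ₙ* T, ContinuousDisc ⇑φ ∧ Function.Surjective ⇑φ) ∧
  ∀ φ : S.carrier →ₙ* T, ContinuousDisc ⇑φ → Function.Surjective ⇑φ →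
    ∃ (D : KRData T) (φψ : S.carrier →ₙ* D.E.K),
      ContinuousDisc ⇑φψ ∧ D.E.π.comp φψ = φ

/-- `S` is a KR-cover: a KR-cover of each of its finite continuous homomorphic images. -/
def IsKRCover (S : TopSgr) : Prop :=
  ∀ (T : Type) [Semigroup T] [Finite T],
    (∃ φ : S.carrier →ₙ* T, ContinuousDisc ⇑φ ∧ Function.Surjective ⇑φ) →
    IsKRCoverOf S T

/-- `S` is `V`-projective. -/
def IsVProjective (V : Pseudovariety) (S : TopSgr) : Prop :=
  IsProV V S ∧ ∀ (T R : TopSgr), IsProV V T → IsProV V R →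
    ∀ (f : S.carrier →ₙ* T.carrier) (g : R.carrier →ₙ* T.carrier),
      Continuous ⇑f → Continuous ⇑g → Function.Surjective ⇑g →
        ∃ f' : S.carrier →ₙ* R.carrier, Continuous ⇑f' ∧ g.comp f' = f

/-! ### Strong KR-covers and letter super-cancellativity -/

/-- `κ : A → S` is a generating mapping: its image generates a dense subsemigroup. -/
def GeneratingMap {A : Type} (S : TopSgr) (κ : A → S.carrier) : Prop :=
  Dense (Subsemigroup.closure (Set.range κ) : Set S.carrier)

/-- The homomorphism `A⁺ → T` extending `a ↦ φ (κ a)`. -/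
def liftGen {A : Type} (S : TopSgr) (κ : A → S.carrier) {T : Type} [Semigroup T]
    (φ : S.carrier →ₙ* T) : FreeSemigroup A →ₙ* T :=
  FreeSemigroup.lift (fun a => φ (κ a))

/-- `S` is a strong KR-cover of the finite semigroup `T` with respect to the
generating mapping `κ`. -/
def IsStrongKRCoverOfWrt {A : Type} (S : TopSgr) (κ : A → S.carrier)
    (T : Type) [Semigroup T] [Finite T] : Prop :=
  ∀ φ : S.carrier →ₙ* T, ContinuousDisc ⇑φ → Function.Surjective ⇑φ →
    ∃ (E : KRExp (liftGen S κ φ)) (φκ : S.carrier →ₙ* E.K),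
      ContinuousDisc ⇑φκ ∧ E.π.comp φκ = φ ∧
      ∀ a : A, φκ (κ a) = E.ψKR (FreeSemigroup.of a)

/-- `S` is a strong KR-cover of the finite semigroup `T` (with respect to some
generating mapping with finite domain). -/
def IsStrongKRCoverOf (S : TopSgr) (T : Type) [Semigroup T] [Finite T] : Prop :=
  ∃ A : Type, Finite A ∧ ∃ κ : A → S.carrier, GeneratingMap S κ ∧
    IsStrongKRCoverOfWrt S κ T

/-- `S` is a strong KR-cover: a strong KR-cover of each of its finite continuous
homomorphic images. -/
def IsStrongKRCover (S : TopSgr) : Prop :=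
  ∀ (T : Type) [Semigroup T] [Finite T],
    (∃ φ : S.carrier →ₙ* T, ContinuousDisc ⇑φ ∧ Function.Surjective ⇑φ) →
    IsStrongKRCoverOf S T

/-- `S` is letter super-cancellative with respect to the subset `A` of `S`. -/
def IsLSC (S : TopSgr) (A : Set S.carrier) : Prop :=
  ∀ a ∈ A, ∀ b ∈ A, ∀ u v : WithOne S.carrier,
    (u * (a : WithOne S.carrier) = v * (b : WithOne S.carrier) → a = b ∧ u = v) ∧
    ((a : WithOne S.carrier) * u = (b : WithOne S.carrier) * v → a = b ∧ u = v)

/-! ### `S^I` and inverse limits -/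

/-- The sum topology on `S^I = S ∪ {I}`: the point `I` is isolated and `S` keeps
its topology. -/
def withOneTopology (S : Type) [TopologicalSpace S] : TopologicalSpace (WithOne S) where
  IsOpen V := IsOpen ((fun s : S => (s : WithOne S)) ⁻¹' V)
  isOpen_univ := by simp
  isOpen_inter := by
    intro U V hU hV
    rw [Set.preimage_inter]
    exact hU.inter hV
  isOpen_sUnion := by
    intro s hs
    rw [Set.preimage_sUnion]
    exact isOpen_biUnion hs

/-- `S^I` as a topological semigroup (in fact a monoid): `S` with an isolated identity
adjoined. -/
def withOneTopSgr (S : TopSgr) : TopSgr :=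
  @TopSgr.mk (WithOne S.carrier) _ (withOneTopology S.carrier)

/-- The inverse limit of a family of topological semigroups, as a subsemigroup of
the product. -/
def invLimSub {I : Type} [Preorder I] (S : I → TopSgr)
    (f : ∀ i j, j ≤ i → ((S i).carrier →ₙ* (S j).carrier)) :
    Subsemigroup (∀ i, (S i).carrier) where
  carrier := {x | ∀ i j (h : j ≤ i), f i j h (x i) = x j}
  mul_mem' := by
    intro a b ha hb i j h
    simp only [Pi.mul_apply, map_mul, ha i j h, hb i j h]

/-- The inverse limit as a topological semigroup (with the topology induced from the
product topology). -/
def invLimTopSgr {I : Type} [Preorder I] (S : I → TopSgr)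
    (f : ∀ i j, j ≤ i → ((S i).carrier →ₙ* (S j).carrier)) : TopSgr :=
  TopSgr.mk (invLimSub S f)
/-! ### Auxiliary material for the coproduct construction -/

section CoproductAux

/-- A fresh copy of `Fin n` carrying no pre-existing algebraic instances. -/
structure VCar (n : ℕ) : Type where
  val : Fin n

instance (n : ℕ) : Finite (VCar n) :=
  Finite.of_injective (fun x : VCar n => x.val) (fun a b h => by cases a; cases b; simpa using h)

instance (n : ℕ) : TopologicalSpace (VCar n) := ⊥
instance (n : ℕ) : DiscreteTopology (VCar n) := ⟨rfl⟩

/-- `VCar n` is equivalent to `Fin n`. -/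
def vcarEquiv (n : ℕ) : VCar n ≃ Fin n where
  toFun := VCar.val
  invFun := VCar.mk
  left_inv := fun x => rfl
  right_inv := fun x => rfl

/-- A small-universe member of `V`: a semigroup structure on some `Fin n` belonging to `V`. -/
structure VStr (V : Pseudovariety) : Type where
  n : ℕ
  sg : Semigroup (VCar n)
  mem : @Pseudovariety.Mem V (VCar n) sg

instance {V : Pseudovariety} (W : VStr V) : Semigroup (VCar W.n) := W.sg

/-- Every bundled member of `V` is isomorphic (via a bijective hom) to some `VStr`. -/
lemma exists_vstr (V : Pseudovariety) (F : SgrIn V) :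
    ∃ (W : VStr V) (g : F.carrier →ₙ* VCar W.n), Function.Bijective ⇑g := by
  haveI : Finite F.carrier := V.finite F.carrier F.mem
  let e : F.carrier ≃ VCar (Nat.card F.carrier) := (Finite.equivFin F.carrier).trans (vcarEquiv (Nat.card F.carrier)).symm
  let sg : Semigroup (VCar (Nat.card F.carrier)) :=
    { mul := fun a b => e (e.symm a * e.symm b)
      mul_assoc := by
        intro a b c
        show e (e.symm (e _) * _) = e (_ * e.symm (e _))
        rw [e.symm_apply_apply, e.symm_apply_apply, mul_assoc] }
  have hmap : ∀ x y : F.carrier,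
      e (x * y) = @HMul.hMul _ _ _ (@instHMul _ sg.toMul) (e x) (e y) := by
    intro x y
    show _ = e (e.symm (e x) * e.symm (e y))
    rw [e.symm_apply_apply, e.symm_apply_apply]
  let g : F.carrier →ₙ* VCar (Nat.card F.carrier) := @MulHom.mk _ _ _ sg.toMul e hmap
  have hsurj : Function.Surjective ⇑g := e.surjective
  have hmem : @Pseudovariety.Mem V (VCar (Nat.card F.carrier)) sg :=
    @Pseudovariety.closed_hom V F.carrier (VCar (Nat.card F.carrier)) _ sg g F.mem hsurj
  exact ⟨⟨Nat.card F.carrier, sg, hmem⟩, g, e.bijective⟩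

variable (V : Pseudovariety) {I : Type} (S : I → TopSgr)

/-- Indexing data for the target product: a small member of `V` together with a
continuous hom from each `S i`. -/
structure CIdx : Type where
  W : VStr V
  p : ∀ i, (S i).carrier →ₙ* VCar W.n
  cont : ∀ i, Continuous ⇑(p i)

/-- The ambient product semigroup. -/
abbrev PCar : Type := ∀ j : CIdx V S, VCar j.W.n

/-- The canonical map from `S i` into the ambient product. -/
def phiMap (i : I) : (S i).carrier →ₙ* PCar V S where
  toFun x := fun j => j.p i x
  map_mul' x y := by funext j; exact map_mul (j.p i) x y

lemma phiMap_cont (i : I) : Continuous ⇑(phiMap V S i) :=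
  continuous_pi fun j => j.cont i

/-- The subsemigroup generated by the images of the `S i`. -/
def Msub : Subsemigroup (PCar V S) :=
  Subsemigroup.closure (⋃ i, Set.range ⇑(phiMap V S i))

/-- Its topological closure: the carrier of the coproduct. -/
def Csub : Subsemigroup (PCar V S) := (Msub V S).topologicalClosure

/-- The structure maps of the coproduct. -/
def phiC (i : I) : (S i).carrier →ₙ* ↥(Csub V S) where
  toFun x := ⟨phiMap V S i x,
    (Msub V S).le_topologicalClosure
      (Subsemigroup.subset_closure (Set.mem_iUnion.2 ⟨i, ⟨x, rfl⟩⟩))⟩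
  map_mul' x y := Subtype.ext (map_mul (phiMap V S i) x y)

lemma phiC_cont (i : I) : Continuous ⇑(phiC V S i) :=
  (phiMap_cont V S i).subtype_mk _

/-- The images of the `phiC i` generate a dense subsemigroup of the coproduct. -/
lemma dense_gens :
    Dense (↑(Subsemigroup.closure (⋃ i, Set.range ⇑(phiC V S i))) : Set ↥(Csub V S)) := by
  set M' : Subsemigroup ↥(Csub V S) := Subsemigroup.closure (⋃ i, Set.range ⇑(phiC V S i))
  have hMM' : (Msub V S : Set (PCar V S)) ⊆ Subtype.val '' (M' : Set ↥(Csub V S)) := by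
    intro m hm
    refine Subsemigroup.closure_induction ?_ ?_ hm
    · rintro x hx
      obtain ⟨i, s, rfl⟩ := Set.mem_iUnion.1 hx
      exact ⟨phiC V S i s,
        Subsemigroup.subset_closure (Set.mem_iUnion.2 ⟨i, ⟨s, rfl⟩⟩), rfl⟩
    · rintro x y _ _ ⟨x', hx', rfl⟩ ⟨y', hy', rfl⟩
      exact ⟨x' * y', M'.mul_mem hx' hy', rfl⟩
  intro c
  rw [Topology.IsInducing.subtypeVal.closure_eq_preimage_closure_image (M' : Set ↥(Csub V S))]
  have hc : (c : PCar V S) ∈ closure (Msub V S : Set (PCar V S)) := c.2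
  exact closure_mono hMM' hc

/-- Two continuous homs out of the coproduct agreeing on the generators are equal. -/
lemma ext_cont {Q : Type} [Semigroup Q] [TopologicalSpace Q] [T2Space Q]
    (Θ₁ Θ₂ : ↥(Csub V S) →ₙ* Q) (h₁ : Continuous ⇑Θ₁) (h₂ : Continuous ⇑Θ₂)
    (h : ∀ i x, Θ₁ (phiC V S i x) = Θ₂ (phiC V S i x)) : Θ₁ = Θ₂ := by
  have : ⇑Θ₁ = ⇑Θ₂ := by
    refine Continuous.ext_on (dense_gens V S) h₁ h₂ ?_
    intro c hc
    refine Subsemigroup.closure_induction ?_ ?_ hc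
    · rintro x hx
      obtain ⟨i, s, rfl⟩ := Set.mem_iUnion.1 hx
      exact h i s
    · intro x y _ _ hx hy
      rw [map_mul, map_mul, hx, hy]
  exact MulHom.ext fun c => congrFun this c

/-- A continuous hom out of the coproduct sending the generators into a closed
subsemigroup maps everything into it. -/
lemma mapsTo_closed {Q : Type} [Semigroup Q] [TopologicalSpace Q]
    (Θ : ↥(Csub V S) →ₙ* Q) (hΘ : Continuous ⇑Θ)
    (R : Subsemigroup Q) (hR : IsClosed (R : Set Q))
    (h : ∀ i x, Θ (phiC V S i x) ∈ R) : ∀ c, Θ c ∈ R := by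
  intro c
  have hsub : (↑(Subsemigroup.closure (⋃ i, Set.range ⇑(phiC V S i))) : Set ↥(Csub V S))
      ⊆ ⇑Θ ⁻¹' (R : Set Q) := by
    intro x hx
    refine Subsemigroup.closure_induction ?_ ?_ hx
    · rintro x hx
      obtain ⟨i, s, rfl⟩ := Set.mem_iUnion.1 hx
      exact h i s
    · intro x y _ _ hx hy
      rw [Set.mem_preimage, map_mul]
      exact R.mul_mem hx hy
  have hc : c ∈ closure (↑(Subsemigroup.closure (⋃ i, Set.range ⇑(phiC V S i)))
      : Set ↥(Csub V S)) := (dense_gens V S) c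
  exact (hR.preimage hΘ).closure_subset (closure_mono hsub hc)

/-- Indexing data for separating points of a pro-`V` semigroup `T`. -/
structure TIdx (V : Pseudovariety) (T : TopSgr) : Type where
  W : VStr V
  p : T.carrier →ₙ* VCar W.n
  cont : Continuous ⇑p

/-- The target product for `T`. -/
abbrev QCar (T : TopSgr) : Type := ∀ k : TIdx V T, VCar k.W.n

/-- The canonical separating map `T → QCar`. -/
def iotaT (T : TopSgr) : T.carrier →ₙ* QCar V T where
  toFun t := fun k => k.p t
  map_mul' x y := by funext k; exact map_mul k.p x y

lemma iotaT_cont (T : TopSgr) : Continuous ⇑(iotaT V T) :=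
  continuous_pi fun k => k.cont

lemma iotaT_inj (T : TopSgr) (hT : IsProV V T) : Function.Injective ⇑(iotaT V T) := by
  intro x y hxy
  by_contra hne
  obtain ⟨F, f, hfc, hfne⟩ := hT.2.2.2 x y hne
  obtain ⟨W, g, hg⟩ := exists_vstr V F
  letI : TopologicalSpace F.carrier := ⊥
  haveI : DiscreteTopology F.carrier := ⟨rfl⟩
  have hgc : Continuous (⇑g : F.carrier → VCar W.n) := continuous_of_discreteTopology
  have hcont : Continuous ⇑(g.comp f) := hgc.comp hfc
  have : (iotaT V T) x ⟨W, g.comp f, hcont⟩ = (iotaT V T) y ⟨W, g.comp f, hcont⟩ :=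
    congrFun hxy _
  exact hg.1 this |> hfne

end CoproductAux

/-- Existence of `V`-coproducts of nonempty families of pro-`V` semigroups. -/
theorem coproduct_exists (V : Pseudovariety) {I : Type} [Nonempty I]
    (S : I → TopSgr) (hS : ∀ i, IsProV V (S i)) :
    ∃ (C : TopSgr) (φ : ∀ i, (S i).carrier →ₙ* C.carrier), IsCoproduct V S C φ := by
  classical
  refine ⟨TopSgr.mk ↥(Csub V S), phiC V S, ⟨⟨?_, ?_, ?_, ?_⟩, phiC_cont V S, ?_⟩⟩
  · -- CompactSpace
    exact isCompact_iff_compactSpace.mp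
      ((Subsemigroup.isClosed_topologicalClosure (Msub V S)).isCompact)
  · infer_instance
  · infer_instance
  · -- residually V
    intro x y hxy
    have hxy' : (x : PCar V S) ≠ (y : PCar V S) := fun h => hxy (Subtype.ext h)
    obtain ⟨j, hj⟩ := Function.ne_iff.1 hxy'
    refine ⟨@SgrIn.mk V (VCar j.W.n) j.W.sg j.W.mem,
      ⟨fun c => (c : PCar V S) j, fun a b => rfl⟩, ?_, hj⟩
    exact (continuous_apply j).comp continuous_subtype_val
  · -- universal property
    intro T hT ψ hψ
    haveI : CompactSpace T.carrier := hT.1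
    haveI : T2Space T.carrier := hT.2.1
    haveI : ContinuousMul T.carrier := hT.2.2.1
    have hinj : Function.Injective ⇑(iotaT V T) := iotaT_inj V T hT
    have hce : Topology.IsClosedEmbedding ⇑(iotaT V T) :=
      (iotaT_cont V T).isClosedEmbedding hinj
    let jdx : TIdx V T → CIdx V S := fun k =>
      ⟨k.W, fun i => k.p.comp (ψ i), fun i => k.cont.comp (hψ i)⟩
    let Θ : ↥(Csub V S) →ₙ* QCar V T :=
      ⟨fun c k => (c : PCar V S) (jdx k), fun a b => rfl⟩
    have hΘc : Continuous ⇑Θ :=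
      continuous_pi fun k => (continuous_apply (jdx k)).comp continuous_subtype_val
    let Rsub : Subsemigroup (QCar V T) :=
      { carrier := Set.range ⇑(iotaT V T)
        mul_mem' := by rintro _ _ ⟨a, rfl⟩ ⟨b, rfl⟩; exact ⟨a * b, map_mul _ a b⟩ }
    have hRclosed : IsClosed (Rsub : Set (QCar V T)) := hce.isClosed_range
    have hkey : ∀ i x, Θ (phiC V S i x) ∈ Rsub := fun i x => ⟨ψ i x, rfl⟩
    have hall : ∀ c, Θ c ∈ Rsub := mapsTo_closed V S Θ hΘc Rsub hRclosed hkey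
    have hall' : ∀ c, ∃ t, iotaT V T t = Θ c := hall
    let Ψf : ↥(Csub V S) → T.carrier := fun c => (hall' c).choose
    have hΨspec : ∀ c, iotaT V T (Ψf c) = Θ c := fun c => (hall' c).choose_spec
    let Ψ : ↥(Csub V S) →ₙ* T.carrier :=
      ⟨Ψf, by
        intro a b
        apply hinj
        rw [hΨspec, map_mul, map_mul, hΨspec, hΨspec]⟩
    have hΨc : Continuous ⇑Ψ := by
      rw [hce.toIsInducing.continuous_iff]
      have : ⇑(iotaT V T) ∘ ⇑Ψ = ⇑Θ := funext hΨspec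
      rw [this]; exact hΘc
    have hcomp : ∀ i, Ψ.comp (phiC V S i) = ψ i := by
      intro i
      refine MulHom.ext fun x => hinj ?_
      show iotaT V T (Ψf (phiC V S i x)) = iotaT V T (ψ i x)
      rw [hΨspec]
      rfl
    refine ⟨Ψ, ⟨hΨc, hcomp⟩, ?_⟩
    rintro Ψ' ⟨h1, h2⟩
    refine ext_cont V S Ψ' Ψ h1 hΨc fun i x => ?_
    have e1 : Ψ' ((phiC V S i) x) = (ψ i) x := DFunLike.congr_fun (h2 i) x
    have e2 : Ψ ((phiC V S i) x) = (ψ i) x := DFunLike.congr_fun (hcomp i) x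
    rw [e1, e2]
end

section
/- Let V be a pseudovariety of semigroups and let (S_i)_{i∈I} be a nonempty family of pro-V semigroups. Then for every k∈I, the natural mapping φ_k : S_k → ∐^V_{i∈I} S_i into the V-coproduct is injective, and hence a topological embedding (a homeomorphism onto its image). -/
set_option autoImplicit false

/-! Two points of `S k` separated by a continuous morphism `f` onto a member `F` of `V` stay
separated in the coproduct: sending `S k` to `F` by `f` and every other factor to an idempotent
of `F` induces a morphism from the coproduct that restricts to `f` on `S k`. Being a continuous
injection from a compact space into a Hausdorff space, `φ k` is then an embedding. -/

theorem IsProV.exists_isIdempotentElem {V : Pseudovariety} {T : TopSgr} (hT : IsProV V T)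
    [Nonempty T.carrier] : ∃ e : T.carrier, IsIdempotentElem e :=
  have := hT.1
  have := hT.2.1
  have := hT.2.2.1
  exists_idempotent_of_compact_t2_of_continuous_mul_left fun _ => continuous_mul_const _

theorem SgrIn.isProV_discTopSgr {V : Pseudovariety} (F : SgrIn V) :
    IsProV V (discTopSgr F.carrier) := by
  have : Finite (discTopSgr F.carrier).carrier := V.finite F.carrier F.mem
  have : DiscreteTopology (discTopSgr F.carrier).carrier := ⟨rfl⟩
  exact ⟨Finite.compactSpace, inferInstance, ⟨continuous_of_discreteTopology⟩,
    fun x y hxy => ⟨F, MulHom.id _, continuous_bot, hxy⟩⟩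

def MulHom.constOfIsIdempotentElem {M N : Type} [Mul M] [Mul N] {e : N}
    (he : IsIdempotentElem e) : M →ₙ* N where
  toFun _ := e
  map_mul' _ _ := he.symm

namespace IsCoproduct

variable {V : Pseudovariety} {I : Type} {S : I → TopSgr} {C : TopSgr}
  {φ : ∀ i, (S i).carrier →ₙ* C.carrier}

theorem exists_continuous_comp_eq (h : IsCoproduct V S C φ) {T : TopSgr} (hT : IsProV V T)
    [Nonempty T.carrier] {k : I} (f : (S k).carrier →ₙ* T.carrier) (hf : Continuous f) :
    ∃ Ψ : C.carrier →ₙ* T.carrier, Continuous Ψ ∧ Ψ.comp (φ k) = f := by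
  classical
  obtain ⟨e, he⟩ := hT.exists_isIdempotentElem
  let ψ : ∀ i, (S i).carrier →ₙ* T.carrier :=
    Function.update (fun _ => MulHom.constOfIsIdempotentElem he) k f
  have hψ : ∀ i, Continuous (ψ i) := by
    intro i
    rcases eq_or_ne i k with rfl | hik
    · simpa only [ψ, Function.update_self] using hf
    · rw [show ψ i = _ from Function.update_of_ne hik _ _]
      exact continuous_const
  obtain ⟨Ψ, ⟨hΨ, hΨφ⟩, -⟩ := h.universal T hT ψ hψ
  exact ⟨Ψ, hΨ, by simpa only [ψ, Function.update_self] using hΨφ k⟩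

theorem injective (h : IsCoproduct V S C φ) {k : I} (hk : IsProV V (S k)) :
    Function.Injective (φ k) := by
  intro x y hxy
  by_contra hne
  obtain ⟨F, f, hf, hfxy⟩ := hk.2.2.2 x y hne
  have : Nonempty (discTopSgr F.carrier).carrier := ⟨f x⟩
  obtain ⟨Ψ, -, hΨφ⟩ := h.exists_continuous_comp_eq F.isProV_discTopSgr f hf
  exact hfxy <| (DFunLike.congr_fun hΨφ x).symm.trans <|
    (congrArg Ψ hxy).trans (DFunLike.congr_fun hΨφ y)

theorem isEmbedding (h : IsCoproduct V S C φ) {k : I} (hk : IsProV V (S k)) :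
    Topology.IsEmbedding (φ k) :=
  have := hk.1
  have := h.proV.2.1
  ((h.cont k).isClosedEmbedding (h.injective hk)).isEmbedding

end IsCoproduct

theorem coproduct_factors_embed_general (V : Pseudovariety) {I : Type}
    (S : I → TopSgr) (hS : ∀ i, IsProV V (S i))
    (C : TopSgr) (φ : ∀ i, (S i).carrier →ₙ* C.carrier) (h : IsCoproduct V S C φ)
    (k : I) :
    Function.Injective ⇑(φ k) ∧ Topology.IsEmbedding ⇑(φ k) :=
  ⟨h.injective (hS k), h.isEmbedding (hS k)⟩

/-- The natural mappings into a `V`-coproduct are injective, hence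
topological embeddings. -/
theorem coproduct_factors_embed (V : Pseudovariety) {I : Type} [Nonempty I]
    (S : I → TopSgr) (hS : ∀ i, IsProV V (S i))
    (C : TopSgr) (φ : ∀ i, (S i).carrier →ₙ* C.carrier) (h : IsCoproduct V S C φ)
    (k : I) :
    Function.Injective ⇑(φ k) ∧ Topology.IsEmbedding ⇑(φ k) :=
  coproduct_factors_embed_general V S hS C φ h k
end

section
/- Let V be a pseudovariety of semigroups containing Sl, let (S_i)_{i∈I} be a nonempty family of nontrivial (having at least two elements) pro-V semigroups, let S = ∐^V_{i∈I} S_i with natural mappings φ_i : S_i → S, and let A be a subset of S such that the subsemigroup of S generated by A is dense. Then for every i∈I, the subsemigroup of S_i generated by φ_i⁻¹(A) is dense in S_i. -/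
set_option autoImplicit false

/-! Suppose `x ∈ S_i` lies outside the closure `D` of the subsemigroup generated by `φ_i⁻¹(A)`.
Compactness separates `x` from `D` by one continuous `f : S_i → F` with `F ∈ V`. Since `Sl ⊆ V`,
also `F⁰ ∈ V`, and the coproduct turns `f` on `S_i` and `0` on the other factors into a continuous
`Ψ : S → F⁰`. As `Ψ⁻¹(0)` is an ideal, `Ψ⁻¹(0) ∪ φ_i(D)` is a closed subsemigroup of `S`. It
contains `A`: taking `D = S_i` instead, the same set contains all factors and is therefore all of
`S`, so every `a ∈ A` with `Ψ a ≠ 0` is `φ_i y` for some `y ∈ φ_i⁻¹(A) ⊆ D`. Hence it contains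
`φ_i x`, and `Ψ (φ_i x) = f x ≠ 0` forces `f x ∈ f(D)`. -/

theorem ContinuousDisc.isClopen_preimage {X Y : Type} [TopologicalSpace X] {f : X → Y}
    (hf : ContinuousDisc f) (s : Set Y) : IsClopen (f ⁻¹' s) :=
  let _ : TopologicalSpace Y := ⊥
  have : DiscreteTopology Y := ⟨rfl⟩
  (isClopen_discrete s).preimage hf

theorem ContinuousDisc.comp {X Y Z : Type} [TopologicalSpace X] {f : X → Y}
    (hf : ContinuousDisc f) (g : Y → Z) : ContinuousDisc (g ∘ f) :=
  @Continuous.comp _ _ _ _ ⊥ ⊥ _ _ continuous_bot hf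

theorem ContinuousDisc.comp_continuous {X Y Z : Type} [TopologicalSpace X] [TopologicalSpace Y]
    {f : Y → Z} (hf : ContinuousDisc f) {g : X → Y} (hg : Continuous g) : ContinuousDisc (f ∘ g) :=
  let _ : TopologicalSpace Z := ⊥
  Continuous.comp hf hg

theorem continuousDisc_pi {X ι : Type} [TopologicalSpace X] [Finite ι] {Y : ι → Type}
    {f : ∀ i, X → Y i} (hf : ∀ i, ContinuousDisc (f i)) : ContinuousDisc fun x i => f i x := by
  let _ : ∀ i, TopologicalSpace (Y i) := fun _ => ⊥
  have : ∀ i, DiscreteTopology (Y i) := fun _ => ⟨rfl⟩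
  unfold ContinuousDisc
  rw [← DiscreteTopology.eq_bot (α := ∀ i, Y i)]
  exact continuous_pi hf

instance semigroupCond (F G : Type) [Semigroup F] [Semigroup G] :
    ∀ b, Semigroup (cond b F G)
  | true => ‹Semigroup F›
  | false => ‹Semigroup G›

theorem Pseudovariety.mem_prod (V : Pseudovariety) {F G : Type} [Semigroup F] [Semigroup G]
    (hF : V.Mem F) (hG : V.Mem G) : V.Mem (F × G) :=
  V.closed_hom _ _ ⟨fun p => (p true, p false), fun _ _ => rfl⟩
    (V.closed_prod Bool (fun b => cond b F G) fun b => by cases b <;> assumption)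
    fun x => ⟨fun b => Bool.rec x.2 x.1 b, rfl⟩

/-- `F⁰` is the image of `F × {0, 1}` under `(a, 1) ↦ a`, `(a, 0) ↦ 0`. -/
theorem ContainsSl.mem_withZero {V : Pseudovariety} (hSl : ContainsSl V) {F : Type}
    [Semigroup F] [Nonempty F] (hF : V.Mem F) : V.Mem (WithZero F) := by
  have hU : V.Mem (WithZero Unit) := by
    have : Finite (WithZero Unit) := inferInstanceAs (Finite (Option Unit))
    exact hSl _ (fun x y => by induction x <;> induction y <;> rfl)
      fun x => by induction x <;> rfl
  refine V.closed_hom _ _ ⟨fun p => Option.map (fun _ => p.1) p.2, ?_⟩ (V.mem_prod hF hU) ?_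
  · rintro ⟨a, x⟩ ⟨b, y⟩
    induction x <;> induction y <;> rfl
  · intro z
    induction z with
    | zero => exact ⟨(Classical.arbitrary F, 0), rfl⟩
    | coe a => exact ⟨(a, (() : Unit)), rfl⟩

theorem isProV_discTopSgr (V : Pseudovariety) {F : Type} [Semigroup F] (hF : V.Mem F) :
    IsProV V (discTopSgr F) := by
  have : Finite (discTopSgr F).carrier := V.finite F hF
  have : DiscreteTopology (discTopSgr F).carrier := ⟨rfl⟩
  exact ⟨Finite.compactSpace, inferInstance, ⟨continuous_of_discreteTopology⟩,
    fun x y hxy => ⟨⟨F, hF⟩, MulHom.id _, continuous_bot, hxy⟩⟩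

namespace IsProV

variable {V : Pseudovariety} {S : TopSgr}

theorem of_isClosed (hS : IsProV V S) {K : Subsemigroup S.carrier}
    (hK : IsClosed (K : Set S.carrier)) : IsProV V ⟨K⟩ := by
  obtain ⟨_, _, _, hsep⟩ := hS
  refine ⟨isCompact_iff_compactSpace.mp hK.isCompact, inferInstance, inferInstance,
    fun x y hxy => ?_⟩
  obtain ⟨F, f, hf, hfxy⟩ := hsep x y (Subtype.coe_ne_coe.mpr hxy)
  exact ⟨F, f.comp (MulMemClass.subtype K), hf.comp_continuous continuous_subtype_val, hfxy⟩

theorem exists_hom_separating_closed (hS : IsProV V S) {K : Set S.carrier} (hK : IsClosed K)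
    {x : S.carrier} (hx : x ∉ K) :
    ∃ (F : SgrIn V) (f : S.carrier →ₙ* F.carrier), ContinuousDisc ⇑f ∧ ∀ d ∈ K, f d ≠ f x := by
  obtain ⟨_, _, _, hsep⟩ := hS
  choose F f hf hne using fun d : K => hsep d x (ne_of_mem_of_not_mem d.2 hx)
  obtain ⟨t, ht⟩ := hK.isCompact.elim_finite_subcover (fun d : K => f d ⁻¹' {f d d})
    (fun d => ((hf d).isClopen_preimage _).isOpen) fun y hy => Set.mem_iUnion.2 ⟨⟨y, hy⟩, rfl⟩
  refine ⟨⟨∀ d : t, (F d).carrier, V.closed_prod _ _ fun d => (F d).mem⟩,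
    ⟨fun y d => f d y, fun _ _ => funext fun d => map_mul (f d) _ _⟩,
    continuousDisc_pi fun d => hf d, fun d hd hdx => ?_⟩
  obtain ⟨d', hd', hdd'⟩ := Set.mem_iUnion₂.1 (ht hd)
  exact hne d' (hdd'.symm.trans (congrFun hdx ⟨d', hd'⟩))

end IsProV

theorem Subsemigroup.mem_of_dense_closure_of_subset {M : Type} [Semigroup M] [TopologicalSpace M]
    {A : Set M} (hA : Dense (closure A : Set M)) {T : Subsemigroup M}
    (hT : IsClosed (T : Set M)) (hAT : A ⊆ T) (c : M) : c ∈ T :=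
  closure_minimal (closure_le.2 hAT) hT (hA c)

section ZeroFiber

variable {M N W : Type} [Semigroup M] [Semigroup N] [SemigroupWithZero W]

/-- `Ψ⁻¹(0)` is an ideal of `M`, so its union with any subsemigroup is a subsemigroup. -/
def zeroFiberUnionImage (Ψ : M →ₙ* W) (φ : N →ₙ* M) (D : Subsemigroup N) : Subsemigroup M where
  carrier := Ψ ⁻¹' {0} ∪ φ '' D
  mul_mem' := by
    rintro _ _ (ha | ⟨x, hx, rfl⟩) (hb | ⟨y, hy, rfl⟩)
    · exact Or.inl (by simp_all)
    · exact Or.inl (by simp_all)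
    · exact Or.inl (by simp_all)
    · exact Or.inr ⟨x * y, D.mul_mem hx hy, map_mul φ x y⟩

theorem isClosed_zeroFiberUnionImage [TopologicalSpace M] [T2Space M] [TopologicalSpace N]
    [CompactSpace N] {Ψ : M →ₙ* W} (hΨ : ContinuousDisc Ψ) {φ : N →ₙ* M} (hφ : Continuous φ)
    {D : Subsemigroup N} (hD : IsClosed (D : Set N)) :
    IsClosed (zeroFiberUnionImage Ψ φ D : Set M) :=
  (hΨ.isClopen_preimage _).isClosed.union (hD.isCompact.image hφ).isClosed

end ZeroFiber

namespace IsCoproduct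

variable {V : Pseudovariety} {I : Type} {S : I → TopSgr} {C : TopSgr}
  {φ : ∀ i, (S i).carrier →ₙ* C.carrier}

/-- The factors topologically generate the coproduct: otherwise the closed subsemigroup they
generate would be a second target through which the identity of `C` factors. -/
theorem dense_closure_iUnion_range (h : IsCoproduct V S C φ) :
    Dense (Subsemigroup.closure (⋃ j, Set.range (φ j)) : Set C.carrier) := by
  have := h.proV.2.2.1
  set K := (Subsemigroup.closure (⋃ j, Set.range (φ j))).topologicalClosure
  have hφK : ∀ j x, φ j x ∈ K := fun j x => Subsemigroup.le_topologicalClosure _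
    (Subsemigroup.subset_closure (Set.mem_iUnion.2 ⟨j, x, rfl⟩))
  obtain ⟨Ψ, ⟨hΨ, hΨφ⟩, -⟩ := h.universal (TopSgr.mk K)
    (h.proV.of_isClosed (Subsemigroup.isClosed_topologicalClosure _))
    (fun j => (φ j).codRestrict K (hφK j)) fun j => (h.cont j).subtype_mk _
  have hid : (MulMemClass.subtype K).comp Ψ = MulHom.id C.carrier :=
    (h.universal C h.proV φ h.cont).unique
      ⟨continuous_subtype_val.comp hΨ, fun j => by rw [MulHom.comp_assoc, hΨφ j]; rfl⟩
      ⟨continuous_id, fun j => MulHom.id_comp _⟩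
  intro c
  have hc := DFunLike.congr_fun hid c
  simp only [MulHom.comp_apply, MulHom.id_apply] at hc
  exact hc ▸ (Ψ c).2

theorem exists_extend_by_zero (h : IsCoproduct V S C φ) (i : I) {W : Type}
    [SemigroupWithZero W] (hW : V.Mem W) {ψ : (S i).carrier →ₙ* W} (hψ : ContinuousDisc ψ) :
    ∃ Ψ : C.carrier →ₙ* W, ContinuousDisc Ψ ∧ (∀ x, Ψ (φ i x) = ψ x) ∧
      ∀ j ≠ i, ∀ x, Ψ (φ j x) = 0 := by
  classical
  let ψs := Function.update (fun j => (⟨fun _ => 0, fun _ _ => (mul_zero 0).symm⟩ :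
    (S j).carrier →ₙ* W)) i ψ
  have hψs : ∀ j, ContinuousDisc (ψs j) := by
    intro j
    by_cases hj : j = i
    · subst hj
      simpa [ψs] using hψ
    · rw [show ψs j = _ from Function.update_of_ne hj _ _]
      exact @continuous_const _ _ _ ⊥ _
  obtain ⟨Ψ, ⟨hΨ, hΨφ⟩, -⟩ := h.universal (discTopSgr W) (isProV_discTopSgr V hW) ψs hψs
  refine ⟨Ψ, hΨ, fun x => ?_, fun j hj x => ?_⟩
  · have := DFunLike.congr_fun (hΨφ i) x
    simp only [ψs, Function.update_self, MulHom.comp_apply] at this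
    exact this
  · have := DFunLike.congr_fun (hΨφ j) x
    simp only [ψs, Function.update_of_ne hj, MulHom.comp_apply] at this
    exact this

theorem mem_range_of_ne_zero (h : IsCoproduct V S C φ) {i : I} [CompactSpace (S i).carrier]
    {W : Type} [SemigroupWithZero W] {Ψ : C.carrier →ₙ* W} (hΨ : ContinuousDisc Ψ)
    (hΨφ : ∀ j ≠ i, ∀ x, Ψ (φ j x) = 0) {c : C.carrier} (hc : Ψ c ≠ 0) :
    c ∈ Set.range (φ i) := by
  have := h.proV.2.1
  have hcT : c ∈ zeroFiberUnionImage Ψ (φ i) ⊤ := by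
    refine Subsemigroup.mem_of_dense_closure_of_subset h.dense_closure_iUnion_range
      (isClosed_zeroFiberUnionImage hΨ (h.cont i) isClosed_univ) ?_ c
    rintro _ ⟨_, ⟨j, rfl⟩, x, rfl⟩
    by_cases hj : j = i
    · subst hj
      exact Or.inr ⟨x, trivial, rfl⟩
    · exact Or.inl (hΨφ j hj x)
  rcases hcT with hc0 | ⟨x, -, rfl⟩
  · exact absurd hc0 hc
  · exact ⟨x, rfl⟩

end IsCoproduct

theorem traces_of_generating_sets_general (V : Pseudovariety) (hSl : ContainsSl V)
    {I : Type} (S : I → TopSgr) (hS : ∀ i, IsProV V (S i))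
    (C : TopSgr) (φ : ∀ i, (S i).carrier →ₙ* C.carrier) (h : IsCoproduct V S C φ)
    (A : Set C.carrier) (hA : Dense (Subsemigroup.closure A : Set C.carrier)) (i : I) :
    Dense (Subsemigroup.closure (⇑(φ i) ⁻¹' A) : Set (S i).carrier) := by
  obtain ⟨_, _, _, _⟩ := hS i
  obtain ⟨_, _, _, _⟩ := h.proV
  set P := Subsemigroup.closure (φ i ⁻¹' A)
  set D := P.topologicalClosure
  intro x
  by_contra hx
  obtain ⟨F, f, hf, hfx⟩ :=
    (hS i).exists_hom_separating_closed (K := D) P.isClosed_topologicalClosure hx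
  have : Nonempty F.carrier := ⟨f x⟩
  let ι : F.carrier →ₙ* WithZero F.carrier := ⟨(↑), WithZero.coe_mul⟩
  obtain ⟨Ψ, hΨ, hΨi, hΨj⟩ :=
    h.exists_extend_by_zero i (hSl.mem_withZero F.mem) (ψ := ι.comp f) (hf.comp ι)
  have hAD : A ⊆ zeroFiberUnionImage Ψ (φ i) D := by
    intro a ha
    by_cases ha0 : Ψ a = 0
    · exact Or.inl ha0
    obtain ⟨y, rfl⟩ := h.mem_range_of_ne_zero hΨ hΨj ha0
    exact Or.inr ⟨y, P.le_topologicalClosure (Subsemigroup.subset_closure ha), rfl⟩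
  rcases Subsemigroup.mem_of_dense_closure_of_subset hA
    (isClosed_zeroFiberUnionImage hΨ (h.cont i) P.isClosed_topologicalClosure) hAD (φ i x) with
    hx0 | ⟨d, hd, hdx⟩
  · exact WithZero.coe_ne_zero ((hΨi x).symm.trans hx0)
  · exact hfx d hd <|
      WithZero.coe_injective ((hΨi d).symm.trans ((congrArg Ψ hdx).trans (hΨi x)))

/-- Traces of generating sets of a `V`-coproduct on the factors generate
the factors, when `V` contains `Sl` and the factors are nontrivial. -/
theorem traces_of_generating_sets (V : Pseudovariety) (hSl : ContainsSl V)
    {I : Type} [Nonempty I] (S : I → TopSgr) (hS : ∀ i, IsProV V (S i))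
    (hnt : ∀ i, Nontrivial (S i).carrier)
    (C : TopSgr) (φ : ∀ i, (S i).carrier →ₙ* C.carrier) (h : IsCoproduct V S C φ)
    (A : Set C.carrier) (hA : Dense (Subsemigroup.closure A : Set C.carrier)) (i : I) :
    Dense (Subsemigroup.closure (⇑(φ i) ⁻¹' A) : Set (S i).carrier) :=
  traces_of_generating_sets_general V hSl S hS C φ h A hA i
end

section
/- Let φ : A⁺ → S and ψ : B⁺ → T be homomorphisms from free semigroups on finite alphabets onto finite semigroups, and suppose the homomorphisms λ : S → T and α : A⁺ → B⁺ satisfy λ∘φ = ψ∘α. Then there is a unique homomorphism Λ : S_φ^KR → T_ψ^KR such that Λ∘φ^KR = ψ^KR∘α, and this Λ moreover satisfies π_ψ∘Λ = λ∘π_φ. -/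
set_option autoImplicit false

/-!
Write `f a` for the letters of `α(a)`. The path `p_{α u}` of `Γ_ψ` is obtained from `p_u` by
replacing each edge `e'`, labelled `a`, by the path labelled `f a` between the `λ`-images of the
endpoints of `e'`; this uses `λ ∘ φ = ψ ∘ α`. If an edge `e` in the block of `e'` is a
transition edge, so is `e'`: a path back from the target of `e'` to its source maps to a
path in `Γ_ψ` which, completed by the two remaining pieces of the block, leads from the target
of `e` back to its source. Hence `T(p_{α u})` consists of the transition edges in the blocks of
the edges of `T(p_u)`, so `α` maps `≡_φ`-classes into `≡_ψ`-classes and induces `Λ`.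
Uniqueness and `π_ψ ∘ Λ = λ ∘ π_φ` follow because `φ^KR` is onto.
-/

open Relation

theorem MulHom.existsUnique_comp_eq_of_surjective {M N P : Type*} [Mul M] [Mul N] [Mul P]
    {f : M →ₙ* N} (hf : Function.Surjective f) (g : M →ₙ* P)
    (hg : ∀ x y, f x = f y → g x = g y) : ∃! h : N →ₙ* P, h.comp f = g := by
  have hsec : ∀ n, f (Function.surjInv hf n) = n := Function.surjInv_eq hf
  refine ⟨⟨fun n => g (Function.surjInv hf n), fun m n => ?_⟩, ?_, fun h hh => ?_⟩
  · rw [← map_mul]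
    exact hg _ _ (by rw [map_mul, hsec, hsec, hsec])
  · ext x
    exact hg _ _ (hsec (f x))
  · refine (MulHom.cancel_right hf).1 (hh.trans ?_)
    ext x
    exact hg _ _ (hsec (f x)).symm

/-- The congruence `≡_ψ` on `A⁺` defining the Karnofsky–Rhodes expansion. -/
def KREquiv {A T : Type} [Semigroup T] (ψ : FreeSemigroup A →ₙ* T) (u v : FreeSemigroup A) :
    Prop :=
  ψ u = ψ v ∧ transEdges ψ u = transEdges ψ v

section Words

variable {A T : Type} [Semigroup T] (ψ : FreeSemigroup A →ₙ* T)

@[simp]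
theorem letters_of (a : A) : letters (FreeSemigroup.of a) = [a] := rfl

theorem letters_mul (u v : FreeSemigroup A) : letters (u * v) = letters u ++ letters v := rfl

theorem letters_map {B : Type} (α : FreeSemigroup A →ₙ* FreeSemigroup B)
    (u : FreeSemigroup A) :
    letters (α u) = (letters u).flatMap fun a => letters (α (FreeSemigroup.of a)) := by
  induction u using FreeSemigroup.recOnMul with
  | ih1 a => simp
  | ih2 a u _ ih => rw [map_mul, letters_mul, letters_mul, ih, List.flatMap_append]; simp

@[simp]
theorem wordImg_nil : wordImg ψ [] = 1 := rfl

@[simp]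
theorem wordImg_cons (a : A) (w : List A) :
    wordImg ψ (a :: w) = letterImg ψ a * wordImg ψ w := by
  simp [wordImg]

@[simp]
theorem wordImg_append (w₁ w₂ : List A) :
    wordImg ψ (w₁ ++ w₂) = wordImg ψ w₁ * wordImg ψ w₂ := by
  simp [wordImg]

theorem wordImg_letters (u : FreeSemigroup A) : wordImg ψ (letters u) = (ψ u : WithOne T) := by
  induction u using FreeSemigroup.recOnMul with
  | ih1 a => simp [letterImg]
  | ih2 a u _ ih => rw [letters_mul, wordImg_append, ih, map_mul]; simp [letterImg]

theorem reflTransGen_krStep_wordImg (w : List A) (x z : WithOne T) :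
    ReflTransGen (KRStep ψ) (x, wordImg ψ w * z) (x * wordImg ψ w, z) := by
  induction w generalizing x with
  | nil => simpa using ReflTransGen.refl
  | cons a w ih =>
    refine ReflTransGen.head ⟨a, rfl, ?_⟩ (by simpa [mul_assoc] using ih (x * letterImg ψ a))
    simp [mul_assoc]

/-- The edges of the path of `Γ_ψ` labelled `w` from `(x, ψ(w) z)` to `(x ψ(w), z)`. -/
def walkEdges (x z : WithOne T) (w : List A) : Set (KREdge A T) :=
  {e | ∃ (w₁ w₂ : List A) (a : A), w = w₁ ++ a :: w₂ ∧
    e = ((x * wordImg ψ w₁, wordImg ψ (a :: w₂) * z), a,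
      (x * wordImg ψ (w₁ ++ [a]), wordImg ψ w₂ * z))}

theorem pathEdges_eq_walkEdges (u : FreeSemigroup A) :
    pathEdges ψ u = walkEdges ψ 1 1 (letters u) := by
  simp [pathEdges, walkEdges]

@[simp]
theorem walkEdges_nil (x z : WithOne T) : walkEdges ψ x z [] = ∅ := by
  simp [walkEdges]

theorem walkEdges_cons (x z : WithOne T) (a : A) (w : List A) :
    walkEdges ψ x z (a :: w) =
      insert ((x, wordImg ψ (a :: w) * z), a, (x * letterImg ψ a, wordImg ψ w * z))
        (walkEdges ψ (x * letterImg ψ a) z w) := by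
  ext e
  simp only [walkEdges, Set.mem_insert_iff, Set.mem_ofPred_eq, List.cons_eq_append_iff]
  constructor
  · rintro ⟨w₁, w₂, b, ⟨rfl, h⟩ | ⟨w₁', rfl, rfl⟩, rfl⟩
    · obtain ⟨rfl, rfl⟩ := List.cons_eq_cons.mp h
      simp
    · exact Or.inr ⟨w₁', w₂, b, rfl, by simp [mul_assoc]⟩
  · rintro (rfl | ⟨w₁, w₂, b, rfl, rfl⟩)
    · exact ⟨[], w, a, Or.inl ⟨rfl, rfl⟩, by simp⟩
    · exact ⟨a :: w₁, w₂, b, Or.inr ⟨w₁, rfl, rfl⟩, by simp [mul_assoc]⟩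

theorem walkEdges_append (x z : WithOne T) (w₁ w₂ : List A) :
    walkEdges ψ x z (w₁ ++ w₂) =
      walkEdges ψ x (wordImg ψ w₂ * z) w₁ ∪ walkEdges ψ (x * wordImg ψ w₁) z w₂ := by
  induction w₁ generalizing x with
  | nil => simp
  | cons a w₁ ih =>
    rw [List.cons_append, walkEdges_cons, walkEdges_cons, ih, Set.insert_union]
    simp [mul_assoc]

theorem isKREdge_of_mem_walkEdges {x z : WithOne T} {w : List A} {e : KREdge A T}
    (he : e ∈ walkEdges ψ x z w) : IsKREdge ψ e := by
  obtain ⟨w₁, w₂, a, -, rfl⟩ := he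
  exact ⟨by simp [mul_assoc], by simp [mul_assoc]⟩

theorem reflTransGen_of_mem_walkEdges {x z : WithOne T} {w : List A} {e : KREdge A T}
    (he : e ∈ walkEdges ψ x z w) :
    ReflTransGen (KRStep ψ) e.2.2 (x * wordImg ψ w, z) ∧
      ReflTransGen (KRStep ψ) (x, wordImg ψ w * z) e.1 := by
  obtain ⟨w₁, w₂, a, rfl, rfl⟩ := he
  constructor
  · simpa [mul_assoc] using reflTransGen_krStep_wordImg ψ w₂ (x * wordImg ψ (w₁ ++ [a])) z
  · simpa [mul_assoc] using reflTransGen_krStep_wordImg ψ w₁ x (wordImg ψ (a :: w₂) * z)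

end Words

section Functoriality

variable {A B S T : Type} [Semigroup S] [Semigroup T] {φ : FreeSemigroup A →ₙ* S}
  (ψ : FreeSemigroup B →ₙ* T) (lam : S →ₙ* T)
  (α : FreeSemigroup A →ₙ* FreeSemigroup B)

def edgeBlock (e' : KREdge A S) : Set (KREdge B T) :=
  walkEdges ψ (WithOne.mapMulHom lam e'.1.1) (WithOne.mapMulHom lam e'.2.2.2)
    (letters (α (FreeSemigroup.of e'.2.1)))

variable {ψ lam α}

theorem mapMulHom_letterImg (hcomm : lam.comp φ = ψ.comp α) (a : A) :
    WithOne.mapMulHom lam (letterImg φ a) = wordImg ψ (letters (α (FreeSemigroup.of a))) := by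
  rw [wordImg_letters, letterImg, WithOne.mapMulHom_coe, ← MulHom.comp_apply, hcomm,
    MulHom.comp_apply]

theorem wordImg_flatMap (hcomm : lam.comp φ = ψ.comp α) (w : List A) :
    wordImg ψ (w.flatMap fun a => letters (α (FreeSemigroup.of a))) =
      WithOne.mapMulHom lam (wordImg φ w) := by
  induction w with
  | nil => simp
  | cons a w ih => simp [ih, mapMulHom_letterImg hcomm]

theorem reflTransGen_krStep_map (hcomm : lam.comp φ = ψ.comp α) {p q : KRVtx S}
    (h : ReflTransGen (KRStep φ) p q) :
    ReflTransGen (KRStep ψ) (Prod.map (WithOne.mapMulHom lam) (WithOne.mapMulHom lam) p)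
      (Prod.map (WithOne.mapMulHom lam) (WithOne.mapMulHom lam) q) := by
  induction h with
  | refl => exact ReflTransGen.refl
  | @tail v w _ hstep ih =>
    obtain ⟨a, h₁, h₂⟩ := hstep
    have hblock := reflTransGen_krStep_wordImg ψ (letters (α (FreeSemigroup.of a)))
      (WithOne.mapMulHom lam v.1) (WithOne.mapMulHom lam w.2)
    rw [← mapMulHom_letterImg hcomm, ← map_mul, ← map_mul, ← h₂, h₁] at hblock
    exact ih.trans hblock

theorem walkEdges_flatMap (hcomm : lam.comp φ = ψ.comp α) (x z : WithOne S) (w : List A) :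
    walkEdges ψ (WithOne.mapMulHom lam x) (WithOne.mapMulHom lam z)
        (w.flatMap fun a => letters (α (FreeSemigroup.of a))) =
      ⋃ e' ∈ walkEdges φ x z w, edgeBlock ψ lam α e' := by
  induction w generalizing x with
  | nil => simp
  | cons a w ih =>
    rw [List.flatMap_cons, walkEdges_append, walkEdges_cons, Set.biUnion_insert,
      ← mapMulHom_letterImg hcomm, ← map_mul, ih, wordImg_flatMap hcomm, ← map_mul]
    rfl

theorem pathEdges_map (hcomm : lam.comp φ = ψ.comp α) (u : FreeSemigroup A) :
    pathEdges ψ (α u) = ⋃ e' ∈ pathEdges φ u, edgeBlock ψ lam α e' := by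
  rw [pathEdges_eq_walkEdges, pathEdges_eq_walkEdges, letters_map,
    ← map_one (WithOne.mapMulHom lam), walkEdges_flatMap hcomm]

theorem IsTransEdge.of_mem_edgeBlock (hcomm : lam.comp φ = ψ.comp α) {e' : KREdge A S}
    {e : KREdge B T} (he' : IsKREdge φ e') (he : e ∈ edgeBlock ψ lam α e')
    (htrans : IsTransEdge ψ e) : IsTransEdge φ e' := by
  refine ⟨he', fun hback => htrans.2 ?_⟩
  obtain ⟨hto, hfrom⟩ := reflTransGen_of_mem_walkEdges ψ he
  obtain ⟨h₁, h₂⟩ := he'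
  rw [← mapMulHom_letterImg hcomm, ← map_mul, h₁] at hto
  rw [← mapMulHom_letterImg hcomm, ← map_mul, ← h₂] at hfrom
  exact hto.trans ((reflTransGen_krStep_map hcomm hback).trans hfrom)

theorem transEdges_map (hcomm : lam.comp φ = ψ.comp α) (u : FreeSemigroup A) :
    transEdges ψ (α u) =
      (⋃ e' ∈ transEdges φ u, edgeBlock ψ lam α e') ∩ {e | IsTransEdge ψ e} := by
  ext e
  simp only [transEdges, pathEdges_map hcomm, Set.mem_iUnion, Set.mem_inter_iff, exists_prop]
  constructor
  · rintro ⟨⟨e', he', hblock⟩, htrans⟩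
    have hedge : IsKREdge φ e' :=
      isKREdge_of_mem_walkEdges φ (pathEdges_eq_walkEdges φ u ▸ he')
    exact ⟨⟨e', ⟨he', htrans.of_mem_edgeBlock hcomm hedge hblock⟩, hblock⟩, htrans⟩
  · rintro ⟨⟨e', ⟨he', -⟩, hblock⟩, htrans⟩
    exact ⟨⟨e', he', hblock⟩, htrans⟩

theorem KREquiv.map (hcomm : lam.comp φ = ψ.comp α) {u v : FreeSemigroup A}
    (h : KREquiv φ u v) : KREquiv ψ (α u) (α v) := by
  have hcomm' (w : FreeSemigroup A) : ψ (α w) = lam (φ w) := (DFunLike.congr_fun hcomm w).symm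
  exact ⟨by rw [hcomm', hcomm', h.1], by rw [transEdges_map hcomm, transEdges_map hcomm, h.2]⟩

end Functoriality

theorem KR_functorial_general {A B S T : Type}
    [Semigroup S] [Semigroup T]
    (φ : FreeSemigroup A →ₙ* S)
    (ψ : FreeSemigroup B →ₙ* T)
    (lam : S →ₙ* T) (α : FreeSemigroup A →ₙ* FreeSemigroup B)
    (hcomm : lam.comp φ = ψ.comp α)
    (Eφ : KRExp φ) (Eψ : KRExp ψ) :
    (∃! Λ : Eφ.K →ₙ* Eψ.K, Λ.comp Eφ.ψKR = Eψ.ψKR.comp α) ∧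
    (∀ Λ : Eφ.K →ₙ* Eψ.K, Λ.comp Eφ.ψKR = Eψ.ψKR.comp α →
      Eψ.π.comp Λ = lam.comp Eφ.π) := by
  have hcongr : ∀ u v, Eφ.ψKR u = Eφ.ψKR v → Eψ.ψKR (α u) = Eψ.ψKR (α v) :=
    fun u v huv => (Eψ.ker _ _).2 (KREquiv.map hcomm ((Eφ.ker u v).1 huv))
  refine ⟨MulHom.existsUnique_comp_eq_of_surjective Eφ.surj (Eψ.ψKR.comp α) hcongr,
    fun Λ hΛ => ?_⟩
  rw [← MulHom.cancel_right Eφ.surj, MulHom.comp_assoc, hΛ, ← MulHom.comp_assoc, Eψ.proj,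
    ← hcomm, MulHom.comp_assoc, Eφ.proj]

/-- Functoriality of the two-sided Karnofsky–Rhodes expansion. -/
theorem KR_functorial {A B S T : Type} [Finite A] [Finite B]
    [Semigroup S] [Finite S] [Semigroup T] [Finite T]
    (φ : FreeSemigroup A →ₙ* S) (hφ : Function.Surjective ⇑φ)
    (ψ : FreeSemigroup B →ₙ* T) (hψ : Function.Surjective ⇑ψ)
    (lam : S →ₙ* T) (α : FreeSemigroup A →ₙ* FreeSemigroup B)
    (hcomm : lam.comp φ = ψ.comp α)
    (Eφ : KRExp φ) (Eψ : KRExp ψ) :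
    (∃! Λ : Eφ.K →ₙ* Eψ.K, Λ.comp Eφ.ψKR = Eψ.ψKR.comp α) ∧
    (∀ Λ : Eφ.K →ₙ* Eψ.K, Λ.comp Eφ.ψKR = Eψ.ψKR.comp α →
      Eψ.π.comp Λ = lam.comp Eφ.π) :=
  KR_functorial_general φ ψ lam α hcomm Eφ Eψ
end
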